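/- For all real μ > 0, ν > 0 and every a > 0, ∫_0^a (I_μ(x)/x) · (I_ν(a−x)/(a−x)) dx = (1/μ + 1/ν) · I_{μ+ν}(a)/a. -/

import Mathlib

/-!
Expand `I_μ(x)/x = ∑ₖ cₖ x^(2k+μ-1)` and likewise `I_ν(a-x)/(a-x)`, multiply the series as
a Cauchy product and integrate term by term: each term is a Beta integral. After grouping the terms
with `k + l = n`, the claim becomes the convolution identity (of Rothe–Hagen type)
`∑_{k+l=n} R_μ(k) R_ν(l) = R_{μ+ν}(n)` for `R_r(k) = r Γ(2k+r) / (k! Γ(k+r+1))`.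
For `r = s + 1` a positive integer, `R_r(k)` is the coefficient of `z^k` in `C(z)^r`, where `C` is
the Catalan generating function (because `C = 1 + z C²`), so the identity is `C^s C^t = C^(s+t)`.
Both sides are polynomials in `μ` and `ν`, so it extends from positive integers to all reals.
-/

open MeasureTheory Real

/-- The modified Bessel function of the first kind of order `ν`, defined by its series. -/
noncomputable def besselI (ν x : ℝ) : ℝ :=
  ∑' k : ℕ, (x / 2) ^ (2 * (k : ℝ) + ν) /
    (Real.Gamma ((k : ℝ) + 1) * Real.Gamma ((k : ℝ) + ν + 1))

open Finset Set
open scoped Nat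

noncomputable def rotheCoeff (r : ℝ) (k : ℕ) : ℝ :=
  r * Gamma (2 * k + r) / (k ! * Gamma (k + r + 1))

lemma rotheCoeff_zero {r : ℝ} (hr : 0 < r) : rotheCoeff r 0 = 1 := by
  rw [rotheCoeff, Nat.cast_zero, mul_zero, zero_add, Real.Gamma_add_one hr.ne']
  simp [(Real.Gamma_pos_of_pos hr).ne', hr.ne']

-- The coefficientwise form of `C^(r+1) = C^r + z C^(r+2)`.
lemma rotheCoeff_succ_succ {r : ℝ} (hr : 0 < r) (m : ℕ) :
    rotheCoeff (r + 1) (m + 1) = rotheCoeff r (m + 1) + rotheCoeff (r + 2) m := by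
  have h₁ : Gamma (2 * ↑(m + 1) + (r + 1)) = (2 * m + r + 2) * Gamma (2 * m + r + 2) := by
    rw [← Real.Gamma_add_one (by positivity)]; push_cast; ring_nf
  have h₂ : Gamma (↑(m + 1) + (r + 1) + 1) = (m + r + 2) * Gamma (m + r + 2) := by
    rw [← Real.Gamma_add_one (by positivity)]; push_cast; ring_nf
  have h₃ : Gamma (↑(m + 1) + r + 1) = Gamma (m + r + 2) := by push_cast; ring_nf
  have h₄ : Gamma (2 * ↑(m + 1) + r) = Gamma (2 * m + r + 2) := by push_cast; ring_nf
  have h₅ : Gamma (2 * (m : ℝ) + (r + 2)) = Gamma (2 * m + r + 2) := by ring_nf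
  have h₆ : Gamma (m + (r + 2) + 1) = (m + r + 2) * Gamma (m + r + 2) := by
    rw [← Real.Gamma_add_one (by positivity)]; ring_nf
  have : 0 < Gamma (m + r + 2) := Real.Gamma_pos_of_pos (by positivity)
  simp only [rotheCoeff, h₁, h₂, h₃, h₄, h₅, h₆, Nat.factorial_succ]
  push_cast
  field_simp
  ring

lemma rotheCoeff_one (n : ℕ) : rotheCoeff 1 n = catalan n := by
  have h := succ_mul_catalan_eq_centralBinom n
  have h' := Nat.choose_mul_factorial_mul_factorial (Nat.le_add_left n n)
  rw [Nat.add_sub_cancel, ← two_mul, ← Nat.centralBinom_eq_two_mul_choose, ← h] at h'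
  rw [rotheCoeff, show (2 * n + 1 : ℝ) = ((2 * n : ℕ) : ℝ) + 1 by push_cast; ring,
    show (n + 1 + 1 : ℝ) = ((n + 1 : ℕ) : ℝ) + 1 by push_cast; ring,
    Real.Gamma_nat_eq_factorial, Real.Gamma_nat_eq_factorial, ← h', Nat.factorial_succ]
  push_cast
  field_simp

section Catalan

open PowerSeries

lemma catalanSeries_pow_succ (m : ℕ) :
    catalanSeries ^ (m + 1) = catalanSeries ^ m + X * catalanSeries ^ (m + 2) := by
  calc catalanSeries ^ (m + 1) = catalanSeries ^ m * (catalanSeries ^ 2 * X + 1) := by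
        rw [catalanSeries_sq_mul_X_add_one, pow_succ]
    _ = _ := by ring

lemma coeff_catalanSeries_pow (n s : ℕ) :
    ((coeff n (catalanSeries ^ (s + 1)) : ℕ) : ℝ) = rotheCoeff (s + 1) n := by
  induction n generalizing s with
  | zero => simp [rotheCoeff_zero (r := (s : ℝ) + 1) (by positivity)]
  | succ m ihm =>
    induction s with
    | zero => simp [rotheCoeff_one]
    | succ s ihs =>
      rw [catalanSeries_pow_succ (s + 1), map_add, coeff_succ_X_mul, Nat.cast_add, ihs, ihm (s + 2)]
      push_cast
      rw [rotheCoeff_succ_succ (r := s + 1) (by positivity)]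
      ring_nf

lemma rotheCoeff_natCast_convolution (n s t : ℕ) :
    ∑ kl ∈ antidiagonal n, rotheCoeff (s + 1) kl.1 * rotheCoeff (t + 1) kl.2 =
      rotheCoeff (s + t + 2) n := by
  have h := congrArg (fun p : ℕ⟦X⟧ => ((coeff n p : ℕ) : ℝ))
    (pow_add catalanSeries (s + 1) (t + 1))
  simp only [coeff_mul, Nat.cast_sum, Nat.cast_mul, coeff_catalanSeries_pow] at h
  rw [← h, show s + 1 + (t + 1) = (s + t + 1) + 1 by ring, coeff_catalanSeries_pow]
  push_cast; ring_nf

end Catalan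

section Polynomial

open Polynomial

lemma Gamma_add_nat_eq_mul_ascPochhammer {x : ℝ} (hx : 0 < x) (n : ℕ) :
    Gamma (x + n) = Gamma x * (ascPochhammer ℝ n).eval x := by
  induction n with
  | zero => simp
  | succ n ih =>
    rw [Nat.cast_succ, ← add_assoc, Real.Gamma_add_one (by positivity), ih,
      ascPochhammer_succ_right]
    simp only [eval_mul, eval_add, eval_X, eval_natCast]
    ring

-- `rothePoly (k + 1) = X (X+k+2)(X+k+3)⋯(X+2k+1) / (k+1)!`.
noncomputable def rothePoly : ℕ → ℝ[X]
  | 0 => 1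
  | k + 1 => C ((k + 1)! : ℝ)⁻¹ * X * (ascPochhammer ℝ k).comp (X + C ((k : ℝ) + 2))

lemma eval_rothePoly {r : ℝ} (hr : 0 < r) (k : ℕ) : (rothePoly k).eval r = rotheCoeff r k := by
  cases k with
  | zero => simp [rothePoly, rotheCoeff_zero hr]
  | succ k =>
    have h : Gamma (2 * ↑(k + 1) + r) = Gamma (↑(k + 1) + r + 1) *
        (ascPochhammer ℝ k).eval (r + (k + 2)) := by
      rw [show 2 * ((k + 1 : ℕ) : ℝ) + r = (↑(k + 1) + r + 1) + k by push_cast; ring,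
        Gamma_add_nat_eq_mul_ascPochhammer (by positivity)]
      congr 2; push_cast; ring
    have : 0 < Gamma (↑(k + 1) + r + 1) := Real.Gamma_pos_of_pos (by positivity)
    simp only [rothePoly, rotheCoeff, h, eval_mul, eval_C, eval_X, eval_comp, eval_add]
    field_simp

lemma Polynomial.eq_of_eval_natCast_add_one {P Q : ℝ[X]}
    (h : ∀ s : ℕ, P.eval ((s : ℝ) + 1) = Q.eval ((s : ℝ) + 1)) : P = Q := by
  refine eq_of_infinite_eval_eq P Q (infinite_of_injective_forall_mem ?_ h)
  intro a b hab
  exact_mod_cast add_right_cancel hab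

lemma rothePoly_convolution (n : ℕ) (x y : ℝ) :
    ∑ kl ∈ antidiagonal n, (rothePoly kl.1).eval x * (rothePoly kl.2).eval y =
      (rothePoly n).eval (x + y) := by
  -- Interpolate at positive integers, first in `y`, then in `x`.
  have h_nat (s : ℕ) :
      ∑ kl ∈ antidiagonal n, C ((rothePoly kl.1).eval ((s : ℝ) + 1)) * rothePoly kl.2 =
        (rothePoly n).comp (X + C ((s : ℝ) + 1)) := by
    refine eq_of_eval_natCast_add_one fun t => ?_
    simp only [eval_finsetSum, eval_mul, eval_C, eval_comp, eval_add, eval_X]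
    rw [show (t : ℝ) + 1 + (s + 1) = s + t + 2 by ring, eval_rothePoly (by positivity),
      ← rotheCoeff_natCast_convolution]
    exact sum_congr rfl fun kl _ => by
      rw [eval_rothePoly (by positivity), eval_rothePoly (by positivity)]
  have h_real : ∑ kl ∈ antidiagonal n, rothePoly kl.1 * C ((rothePoly kl.2).eval y) =
      (rothePoly n).comp (X + C y) := by
    refine eq_of_eval_natCast_add_one fun s => ?_
    have := congrArg (eval y) (h_nat s)
    simp only [eval_finsetSum, eval_mul, eval_C, eval_comp, eval_add, eval_X] at this ⊢
    rw [this, add_comm]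
  have := congrArg (eval x) h_real
  simpa only [eval_finsetSum, eval_mul, eval_C, eval_comp, eval_add, eval_X] using this

end Polynomial

lemma rotheCoeff_convolution {μ ν : ℝ} (hμ : 0 < μ) (hν : 0 < ν) (n : ℕ) :
    ∑ kl ∈ antidiagonal n, rotheCoeff μ kl.1 * rotheCoeff ν kl.2 = rotheCoeff (μ + ν) n := by
  simp only [← eval_rothePoly hμ, ← eval_rothePoly hν, ← eval_rothePoly (add_pos hμ hν),
    rothePoly_convolution]

lemma integral_rpow_mul_sub_rpow {p q b : ℝ} (hp : 0 < p) (hq : 0 < q) (hb : 0 < b) :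
    ∫ x in (0 : ℝ)..b, x ^ (p - 1) * (b - x) ^ (q - 1) =
      b ^ (p + q - 1) * ProbabilityTheory.beta p q := by
  apply Complex.ofReal_injective
  rw [← intervalIntegral.integral_ofReal]
  convert Complex.betaIntegral_scaled p q hb using 1
  · refine intervalIntegral.integral_congr fun x hx => ?_
    rw [uIcc_of_le hb.le] at hx
    push_cast
    rw [Complex.ofReal_cpow hx.1, Complex.ofReal_cpow (sub_nonneg.2 hx.2)]
    push_cast; rfl
  · rw [Complex.betaIntegral_eq_Gamma_mul_div _ _ (by simpa) (by simpa), ProbabilityTheory.beta,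
      Complex.ofReal_mul, Complex.ofReal_cpow hb.le]
    push_cast
    simp only [← Complex.ofReal_add, Complex.Gamma_ofReal]

lemma intervalIntegrable_rpow_mul_sub_rpow {p q b : ℝ} (hp : 0 < p) (hq : 0 < q) (hb : 0 < b) :
    IntervalIntegrable (fun x => x ^ (p - 1) * (b - x) ^ (q - 1)) volume 0 b := by
  refine intervalIntegral.intervalIntegrable_of_integral_ne_zero ?_
  rw [integral_rpow_mul_sub_rpow hp hq hb]
  exact (mul_pos (rpow_pos_of_pos hb _) (ProbabilityTheory.beta_pos hp hq)).ne'

noncomputable def besselTerm (r x : ℝ) (k : ℕ) : ℝ :=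
  (x / 2) ^ (2 * (k : ℝ) + r) / (Gamma ((k : ℝ) + 1) * Gamma ((k : ℝ) + r + 1))

lemma besselI_eq_tsum (r x : ℝ) : besselI r x = ∑' k, besselTerm r x k := rfl

lemma Gamma_add_one_mul_factorial_le {r : ℝ} (hr : 0 ≤ r) (k : ℕ) :
    Gamma (r + 1) * k ! ≤ Gamma (k + r + 1) := by
  induction k with
  | zero => simp
  | succ k ih =>
    have h : Gamma (↑(k + 1) + r + 1) = (k + r + 1) * Gamma (k + r + 1) := by
      rw [← Real.Gamma_add_one (by positivity)]; push_cast; ring_nf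
    have := Real.Gamma_pos_of_pos (show 0 < r + 1 by positivity)
    rw [h, Nat.factorial_succ, Nat.cast_mul, Nat.cast_succ]
    calc Gamma (r + 1) * ((k + 1) * k !) = (k + 1) * (Gamma (r + 1) * k !) := by ring
      _ ≤ (k + r + 1) * Gamma (k + r + 1) := by gcongr; linarith

lemma besselTerm_nonneg {r x : ℝ} (hr : 0 ≤ r) (hx : 0 ≤ x) (k : ℕ) : 0 ≤ besselTerm r x k := by
  have := Real.Gamma_pos_of_pos (show 0 < (k : ℝ) + r + 1 by positivity)
  have := Real.Gamma_pos_of_pos (show 0 < (k : ℝ) + 1 by positivity)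
  unfold besselTerm
  positivity

lemma summable_besselTerm {r x : ℝ} (hr : 0 ≤ r) (hx : 0 < x) : Summable (besselTerm r x) := by
  have hΓ := Real.Gamma_pos_of_pos (show 0 < r + 1 by positivity)
  refine Summable.of_nonneg_of_le (besselTerm_nonneg hr hx.le) (fun k => ?_)
    ((Real.summable_pow_div_factorial ((x / 2) ^ 2)).mul_left ((x / 2) ^ r / Gamma (r + 1)))
  have hsplit : (x / 2) ^ (2 * (k : ℝ) + r) = (x / 2) ^ r * ((x / 2) ^ 2) ^ k := by
    rw [add_comm, rpow_add (by positivity), ← pow_mul, ← Real.rpow_natCast]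
    push_cast; ring_nf
  have hΓk : Gamma (r + 1) * k ! ≤ k ! * Gamma (k + r + 1) :=
    (Gamma_add_one_mul_factorial_le hr k).trans
      (le_mul_of_one_le_left (by positivity) (by exact_mod_cast k.factorial_pos))
  rw [besselTerm, hsplit, Real.Gamma_nat_eq_factorial]
  calc _ ≤ (x / 2) ^ r * ((x / 2) ^ 2) ^ k / (Gamma (r + 1) * k !) := by gcongr
    _ = _ := by ring

lemma besselTerm_div_self (r : ℝ) {x : ℝ} (hx : 0 < x) (k : ℕ) :
    besselTerm r x k / x = x ^ (2 * (k : ℝ) + r - 1) /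
      (2 ^ (2 * (k : ℝ) + r) * Gamma (k + 1) * Gamma (k + r + 1)) := by
  rw [besselTerm, div_rpow hx.le zero_le_two, rpow_sub hx, rpow_one]
  field_simp

lemma besselTerm_div_mul_eqOn {μ ν a : ℝ} (k l : ℕ) :
    EqOn (fun x => besselTerm μ x k / x * (besselTerm ν (a - x) l / (a - x)))
      (fun x => (2 ^ (2 * (k : ℝ) + μ) * Gamma (k + 1) * Gamma (k + μ + 1) *
        (2 ^ (2 * (l : ℝ) + ν) * Gamma (l + 1) * Gamma (l + ν + 1)))⁻¹ *
          (x ^ (2 * (k : ℝ) + μ - 1) * (a - x) ^ (2 * (l : ℝ) + ν - 1))) (Ioo 0 a) := by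
  intro x hx
  simp only
  rw [besselTerm_div_self μ hx.1, besselTerm_div_self ν (sub_pos.2 hx.2)]
  ring

lemma integrableOn_besselTerm_div_mul {μ ν a : ℝ} (hμ : 0 < μ) (hν : 0 < ν) (ha : 0 < a)
    (k l : ℕ) :
    IntegrableOn (fun x => besselTerm μ x k / x * (besselTerm ν (a - x) l / (a - x)))
      (Ioo 0 a) := by
  refine IntegrableOn.congr_fun ?_ (besselTerm_div_mul_eqOn k l).symm measurableSet_Ioo
  exact ((intervalIntegrable_rpow_mul_sub_rpow (by positivity) (by positivity) ha).1.mono_set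
    Ioo_subset_Ioc_self).const_mul _

lemma integral_besselTerm_div_mul {μ ν a : ℝ} (hμ : 0 < μ) (hν : 0 < ν) (ha : 0 < a)
    (k l : ℕ) :
    ∫ x in Ioo 0 a, besselTerm μ x k / x * (besselTerm ν (a - x) l / (a - x)) =
      rotheCoeff μ k * rotheCoeff ν l * (a ^ (2 * ((k + l : ℕ) : ℝ) + μ + ν - 1) /
        (μ * ν * 2 ^ (2 * ((k + l : ℕ) : ℝ) + μ + ν) * Gamma (2 * ((k + l : ℕ) : ℝ) + μ + ν))) := by
  rw [setIntegral_congr_fun measurableSet_Ioo (besselTerm_div_mul_eqOn k l), integral_const_mul,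
    ← integral_Ioc_eq_integral_Ioo, ← intervalIntegral.integral_of_le ha.le,
    integral_rpow_mul_sub_rpow (by positivity) (by positivity) ha, ProbabilityTheory.beta]
  have hE : 2 * (k : ℝ) + μ + (2 * l + ν) = 2 * ((k + l : ℕ) : ℝ) + μ + ν := by push_cast; ring
  have h2 : (2 : ℝ) ^ (2 * ((k + l : ℕ) : ℝ) + μ + ν) =
      2 ^ (2 * (k : ℝ) + μ) * 2 ^ (2 * (l : ℝ) + ν) := by
    rw [← rpow_add zero_lt_two, hE]
  rw [hE, h2, rotheCoeff, rotheCoeff, Real.Gamma_nat_eq_factorial, Real.Gamma_nat_eq_factorial]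
  have := Real.Gamma_pos_of_pos (show 0 < (k : ℝ) + μ + 1 by positivity)
  have := Real.Gamma_pos_of_pos (show 0 < (l : ℝ) + ν + 1 by positivity)
  have := Real.Gamma_pos_of_pos (show 0 < 2 * ((k + l : ℕ) : ℝ) + μ + ν by positivity)
  field_simp

noncomputable def besselConvTerm (μ ν a : ℝ) (n : ℕ) (x : ℝ) : ℝ :=
  ∑ kl ∈ antidiagonal n, besselTerm μ x kl.1 / x * (besselTerm ν (a - x) kl.2 / (a - x))

lemma besselI_div_mul_eq_tsum_besselConvTerm {μ ν a x : ℝ} (hμ : 0 ≤ μ) (hν : 0 ≤ ν)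
    (hx : x ∈ Ioo 0 a) :
    besselI μ x / x * (besselI ν (a - x) / (a - x)) = ∑' n, besselConvTerm μ ν a n x := by
  have hax : 0 < a - x := sub_pos.2 hx.2
  rw [besselI_eq_tsum, besselI_eq_tsum, ← tsum_div_const, ← tsum_div_const]
  exact tsum_mul_tsum_eq_tsum_sum_antidiagonal_of_summable_norm
    ((summable_besselTerm hμ hx.1).div_const x).norm
    ((summable_besselTerm hν hax).div_const (a - x)).norm

lemma besselConvTerm_nonneg {μ ν a x : ℝ} (hμ : 0 ≤ μ) (hν : 0 ≤ ν) (hx : x ∈ Ioo 0 a)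
    (n : ℕ) : 0 ≤ besselConvTerm μ ν a n x := by
  have hax : 0 < a - x := sub_pos.2 hx.2
  exact sum_nonneg fun kl _ => mul_nonneg
    (div_nonneg (besselTerm_nonneg hμ hx.1.le _) hx.1.le)
    (div_nonneg (besselTerm_nonneg hν hax.le _) hax.le)

lemma integrableOn_besselConvTerm {μ ν a : ℝ} (hμ : 0 < μ) (hν : 0 < ν) (ha : 0 < a) (n : ℕ) :
    IntegrableOn (besselConvTerm μ ν a n) (Ioo 0 a) :=
  integrable_finsetSum _ fun kl _ => integrableOn_besselTerm_div_mul hμ hν ha kl.1 kl.2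

lemma integral_besselConvTerm {μ ν a : ℝ} (hμ : 0 < μ) (hν : 0 < ν) (ha : 0 < a) (n : ℕ) :
    ∫ x in Ioo 0 a, besselConvTerm μ ν a n x = (1 / μ + 1 / ν) * besselTerm (μ + ν) a n / a := by
  unfold besselConvTerm
  rw [integral_finsetSum _ fun (kl : ℕ × ℕ) _ => integrableOn_besselTerm_div_mul hμ hν ha kl.1 kl.2,
    sum_congr rfl fun kl hkl => by
      rw [integral_besselTerm_div_mul hμ hν ha, mem_antidiagonal.1 hkl],
    ← sum_mul, rotheCoeff_convolution hμ hν, rotheCoeff, besselTerm, Real.Gamma_nat_eq_factorial,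
    div_rpow ha.le zero_le_two, rpow_sub ha, rpow_one]
  have := Real.Gamma_pos_of_pos (show 0 < (n : ℝ) + (μ + ν) + 1 by positivity)
  have := Real.Gamma_pos_of_pos (show 0 < 2 * (n : ℝ) + μ + ν by positivity)
  rw [show 2 * (n : ℝ) + (μ + ν) = 2 * n + μ + ν by ring]
  field_simp
  ring

/-- `∫_0^a (I_μ(x)/x)(I_ν(a−x)/(a−x)) dx = (1/μ + 1/ν) I_{μ+ν}(a)/a`. -/
theorem stmt3 (μ ν a : ℝ) (hμ : 0 < μ) (hν : 0 < ν) (ha : 0 < a) :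
    ∫ x in (0 : ℝ)..a, besselI μ x / x * (besselI ν (a - x) / (a - x)) =
    (1 / μ + 1 / ν) * besselI (μ + ν) a / a := by
  have h_norm (n : ℕ) : ∫ x in Ioo 0 a, ‖besselConvTerm μ ν a n x‖ =
      (1 / μ + 1 / ν) * besselTerm (μ + ν) a n / a := by
    rw [← integral_besselConvTerm hμ hν ha, setIntegral_congr_fun measurableSet_Ioo fun x hx =>
      Real.norm_of_nonneg (besselConvTerm_nonneg hμ.le hν.le hx n)]
  have h_summable : Summable fun n => ∫ x in Ioo 0 a, ‖besselConvTerm μ ν a n x‖ := by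
    simp only [h_norm]
    exact ((summable_besselTerm (add_pos hμ hν).le ha).mul_left _).div_const _
  calc ∫ x in (0 : ℝ)..a, besselI μ x / x * (besselI ν (a - x) / (a - x))
      = ∫ x in Ioo 0 a, ∑' n, besselConvTerm μ ν a n x := by
        rw [intervalIntegral.integral_of_le ha.le, integral_Ioc_eq_integral_Ioo]
        exact setIntegral_congr_fun measurableSet_Ioo fun x hx =>
          besselI_div_mul_eq_tsum_besselConvTerm hμ.le hν.le hx
    _ = ∑' n, ∫ x in Ioo 0 a, besselConvTerm μ ν a n x :=
        (integral_tsum_of_summable_integral_norm (integrableOn_besselConvTerm hμ hν ha)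
          h_summable).symm
    _ = (1 / μ + 1 / ν) * besselI (μ + ν) a / a := by
        simp only [integral_besselConvTerm hμ hν ha]
        rw [besselI_eq_tsum, tsum_div_const, tsum_mul_left]
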